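/- arXiv:2601.09986 — 5 statements merged into one kernel-verified Lean document; each statement's English description precedes it below -/
import Mathlib

section
/- If a relation R between states of two GKAT automata is an invariant of the dead-state progression (R progresses to R with the dead-state predicate), then every pair of states in R is trace equivalent. -/
/-- Result of a GKAT automaton transition on an atom. -/
inductive GRes (S A : Type) where
  | reject : GRes S A
  | accept : GRes S A
  | step : S → A → GRes S A

/-- Finite traces: alternating words of atoms and actions ending in an atom. -/
inductive Trace (At A : Type) where
  | atom : At → Trace At A
  | cons : At → A → Trace At A → Trace At A

/-- Finite trace semantics of a state of a GKAT automaton. -/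
inductive InTrace {S At A : Type} (ζ : S → At → GRes S A) : S → Trace At A → Prop where
  | accept {s α} : ζ s α = GRes.accept → InTrace ζ s (Trace.atom α)
  | step {s α s' p w} : ζ s α = GRes.step s' p → InTrace ζ s' w →
      InTrace ζ s (Trace.cons α p w)

/-- A state is dead when its finite trace semantics is empty. -/
def Dead {S At A : Type} (ζ : S → At → GRes S A) (s : S) : Prop :=
  ∀ w, ¬ InTrace ζ s w

/-- Progression with the dead-state predicate between two GKAT automata. -/
def DProgress {S U At A : Type} (ζ₁ : S → At → GRes S A) (ζ₂ : U → At → GRes U A)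
    (R R' : S → U → Prop) : Prop :=
  ∀ s u, R s u → ∀ α,
    ((ζ₁ s α = GRes.accept) ↔ (ζ₂ u α = GRes.accept)) ∧
    (∀ s' p, ζ₁ s α = GRes.step s' p → ζ₂ u α = GRes.reject → Dead ζ₁ s') ∧
    (∀ u' p, ζ₂ u α = GRes.step u' p → ζ₁ s α = GRes.reject → Dead ζ₂ u') ∧
    (∀ s' p u' q, ζ₁ s α = GRes.step s' p → ζ₂ u α = GRes.step u' q → p ≠ q →
      Dead ζ₁ s' ∧ Dead ζ₂ u') ∧
    (∀ s' u' p, ζ₁ s α = GRes.step s' p → ζ₂ u α = GRes.step u' p → R' s' u')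

/-- if `R` is an invariant of the dead-state progression
(`R ⇝_dead R`), then every pair of states in `R` is trace equivalent. -/
theorem invariant_implies_trace_equiv {S U At A : Type}
    (ζ₁ : S → At → GRes S A) (ζ₂ : U → At → GRes U A) (R : S → U → Prop)
    (hinv : DProgress ζ₁ ζ₂ R R) :
    ∀ s u, R s u → ∀ w, InTrace ζ₁ s w ↔ InTrace ζ₂ u w := by
  intro s u hR w
  induction w generalizing s u with
  | atom α =>
    obtain ⟨hiff, _⟩ := hinv s u hR α
    constructor
    · rintro h
      cases h with
      | accept h => exact InTrace.accept (hiff.mp h)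
    · rintro h
      cases h with
      | accept h => exact InTrace.accept (hiff.mpr h)
  | cons α p w ih =>
    obtain ⟨hiff, hdead₁, hdead₂, hdiff, hstep⟩ := hinv s u hR α
    constructor
    · rintro h
      cases h with
      | step h1 h2 =>
        cases hu : ζ₂ u α with
        | reject => exact absurd h2 (hdead₁ _ _ h1 hu _)
        | accept => rw [hiff.mpr hu] at h1; exact absurd h1 (by simp)
        | step u' q =>
          by_cases hpq : p = q
          · subst hpq
            exact InTrace.step hu ((ih _ _ (hstep _ _ _ h1 hu)).mp h2)
          · exact absurd h2 ((hdiff _ _ _ _ h1 hu hpq).1 _)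
    · rintro h
      cases h with
      | step h1 h2 =>
        cases hs : ζ₁ s α with
        | reject => exact absurd h2 (hdead₂ _ _ h1 hs _)
        | accept => rw [hiff.mp hs] at h1; exact absurd h1 (by simp)
        | step s' q =>
          by_cases hpq : q = p
          · subst hpq
            exact InTrace.step hs ((ih _ _ (hstep _ _ _ hs h1)).mpr h2)
          · exact absurd h2 ((hdiff _ _ _ _ hs h1 hpq).2 _)
end

section
/- The trace equivalence relation between two GKAT automata, R_≡ = {(s,u) | ⟦s⟧ = ⟦u⟧}, is an invariant of the dead-state progression: R_≡ progresses to R_≡. -/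
/-! Every clause of the progression is obtained by testing `⟦s⟧ = ⟦u⟧` on one trace: `α` for the
accepting clause, and `α p w` (for `w` a trace of a successor) for the stepping clauses, where
inverting the semantics on the first letter `α p` determines the transition taken. -/

namespace InTrace

variable {S At A : Type} {ζ : S → At → GRes S A} {s s' : S} {α : At} {p q : A} {w : Trace At A}

theorem atom_iff : InTrace ζ s (.atom α) ↔ ζ s α = .accept :=
  ⟨fun | .accept h => h, .accept⟩

theorem cons_iff_of_step (h : ζ s α = .step s' p) :
    InTrace ζ s (.cons α q w) ↔ q = p ∧ InTrace ζ s' w := by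
  constructor
  · rintro (_ | ⟨hstep, hw⟩)
    rw [h, GRes.step.injEq] at hstep
    obtain ⟨rfl, rfl⟩ := hstep
    exact ⟨rfl, hw⟩
  · rintro ⟨rfl, hw⟩
    exact .step h hw

theorem not_cons_of_reject (h : ζ s α = .reject) : ¬ InTrace ζ s (.cons α q w) := by
  rintro (_ | ⟨hstep, -⟩)
  rw [h] at hstep
  cases hstep

end InTrace

/-- the trace equivalence relation
`R_≡ = {(s,u) | ⟦s⟧ = ⟦u⟧}` is an invariant of the dead-state progression. -/
theorem trace_equiv_is_invariant {S U At A : Type}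
    (ζ₁ : S → At → GRes S A) (ζ₂ : U → At → GRes U A) :
    DProgress ζ₁ ζ₂
      (fun s u => ∀ w, InTrace ζ₁ s w ↔ InTrace ζ₂ u w)
      (fun s u => ∀ w, InTrace ζ₁ s w ↔ InTrace ζ₂ u w) := by
  intro s u hR α
  refine ⟨?_, ?_, ?_, ?_, ?_⟩
  · simpa only [InTrace.atom_iff] using hR (.atom α)
  · exact fun s' p h₁ h₂ w hw => InTrace.not_cons_of_reject h₂ ((hR _).1 (.step h₁ hw))
  · exact fun u' p h₂ h₁ w hw => InTrace.not_cons_of_reject h₁ ((hR _).2 (.step h₂ hw))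
  · intro s' p u' q h₁ h₂ hpq
    exact ⟨fun w hw => hpq ((InTrace.cons_iff_of_step h₂).1 ((hR _).1 (.step h₁ hw))).1,
      fun w hw => hpq ((InTrace.cons_iff_of_step h₁).1 ((hR _).2 (.step h₂ hw))).1.symm⟩
  · intro s' u' p h₁ h₂ w
    simpa only [InTrace.cons_iff_of_step h₁, InTrace.cons_iff_of_step h₂, true_and]
      using hR (.cons α p w)
end

section
/- Trace equivalence is the maximal invariant of the dead-state progression: R_≡ = {(s,u) | ⟦s⟧ = ⟦u⟧} progresses to itself, and every relation R that progresses to itself (with the dead-state predicate) is contained in R_≡. -/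
/-! Trace equivalence progresses to itself because a `p`-step of `s` into a live state is
visible as a trace `α p w` of `s`, which every trace-equivalent state must reproduce with a
`p`-step of its own. Conversely, a relation progressing to itself transports traces by
induction on the trace: the dead-state clauses exclude every way the partner could fail to
follow a step of a live trace. -/

section GKAT

variable {S U At A : Type} {ζ : S → At → GRes S A} {ζ₁ : S → At → GRes S A}
  {ζ₂ : U → At → GRes U A} {s s' : S} {u : U} {α : At} {p : A} {w : Trace At A}

theorem inTrace_atom_iff : InTrace ζ s (.atom α) ↔ ζ s α = .accept :=
  ⟨fun | .accept h => h, .accept⟩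

theorem inTrace_cons_iff_of_step (h : ζ s α = .step s' p) :
    InTrace ζ s (.cons α p w) ↔ InTrace ζ s' w := by
  refine ⟨fun | .step h' hw => ?_, (.step h ·)⟩
  obtain ⟨rfl, -⟩ := GRes.step.inj (h.symm.trans h')
  exact hw

theorem exists_step_of_traces_subset (hsub : ∀ w, InTrace ζ₁ s w → InTrace ζ₂ u w)
    (h : ζ₁ s α = .step s' p) (hs' : ¬ Dead ζ₁ s') : ∃ u', ζ₂ u α = .step u' p := by
  obtain ⟨w, hw⟩ := not_forall_not.mp hs'
  obtain ⟨h₂, -⟩ | ⟨h₂, -⟩ := hsub _ (.step h hw)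
  exact ⟨_, h₂⟩

def TraceEquiv (ζ₁ : S → At → GRes S A) (ζ₂ : U → At → GRes U A) (s : S) (u : U) : Prop :=
  ∀ w, InTrace ζ₁ s w ↔ InTrace ζ₂ u w

theorem dProgress_traceEquiv (ζ₁ : S → At → GRes S A) (ζ₂ : U → At → GRes U A) :
    DProgress ζ₁ ζ₂ (TraceEquiv ζ₁ ζ₂) (TraceEquiv ζ₁ ζ₂) := by
  intro s u hsu α
  have sub₁ w := (hsu w).mp
  have sub₂ w := (hsu w).mpr
  refine ⟨?_, ?_, ?_, ?_, ?_⟩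
  · simpa only [inTrace_atom_iff] using hsu (.atom α)
  · intro s' p h₁ h₂
    by_contra hs'
    obtain ⟨u', h⟩ := exists_step_of_traces_subset sub₁ h₁ hs'
    simp [h₂] at h
  · intro u' p h₂ h₁
    by_contra hu'
    obtain ⟨s', h⟩ := exists_step_of_traces_subset sub₂ h₂ hu'
    simp [h₁] at h
  · intro s' p u' q h₁ h₂ hpq
    constructor
    · by_contra hs'
      obtain ⟨u'', h⟩ := exists_step_of_traces_subset sub₁ h₁ hs'
      exact hpq (GRes.step.inj (h.symm.trans h₂)).2
    · by_contra hu'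
      obtain ⟨s'', h⟩ := exists_step_of_traces_subset sub₂ h₂ hu'
      exact hpq (GRes.step.inj (h.symm.trans h₁)).2.symm
  · intro s' u' p h₁ h₂ w
    rw [← inTrace_cons_iff_of_step h₁, ← inTrace_cons_iff_of_step h₂]
    exact hsu _

theorem DProgress.swap {R R' : S → U → Prop} (hP : DProgress ζ₁ ζ₂ R R') :
    DProgress ζ₂ ζ₁ (flip R) (flip R') := by
  intro u s h α
  obtain ⟨hacc, hrej₂, hrej₁, hne, hnext⟩ := hP s u h α
  exact ⟨hacc.symm, hrej₁, hrej₂, fun u' q s' p h₂ h₁ hqp => (hne s' p u' q h₁ h₂ hqp.symm).symm,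
    fun u' s' p h₂ h₁ => hnext s' u' p h₁ h₂⟩

theorem DProgress.inTrace_of_inTrace {R : S → U → Prop} (hP : DProgress ζ₁ ζ₂ R R)
    (hR : R s u) (hw : InTrace ζ₁ s w) : InTrace ζ₂ u w := by
  induction hw generalizing u with
  | accept h => exact .accept ((hP _ u hR _).1.mp h)
  | @step s α s' p w h₁ hw ih =>
    obtain ⟨hacc, hrej, -, hne, hnext⟩ := hP s u hR α
    match h₂ : ζ₂ u α with
    | .reject => exact (hrej _ _ h₁ h₂ _ hw).elim
    | .accept => simp [hacc.mpr h₂] at h₁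
    | .step u' q =>
      obtain rfl | hpq := eq_or_ne p q
      · exact .step h₂ (ih (hnext _ _ _ h₁ h₂))
      · exact ((hne _ _ _ _ h₁ h₂ hpq).1 _ hw).elim

theorem DProgress.le_traceEquiv {R : S → U → Prop} (hP : DProgress ζ₁ ζ₂ R R) (hR : R s u) :
    TraceEquiv ζ₁ ζ₂ s u :=
  fun _ => ⟨hP.inTrace_of_inTrace hR, hP.swap.inTrace_of_inTrace hR⟩

end GKAT

/-- trace equivalence is the maximal invariant of the dead-state
progression: `R_≡` progresses to itself, and every relation progressing to
itself is contained in `R_≡`. -/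
theorem trace_equiv_is_maximal_invariant {S U At A : Type}
    (ζ₁ : S → At → GRes S A) (ζ₂ : U → At → GRes U A) :
    DProgress ζ₁ ζ₂
      (fun s u => ∀ w, InTrace ζ₁ s w ↔ InTrace ζ₂ u w)
      (fun s u => ∀ w, InTrace ζ₁ s w ↔ InTrace ζ₂ u w) ∧
    (∀ R : S → U → Prop, DProgress ζ₁ ζ₂ R R →
      ∀ s u, R s u → ∀ w, InTrace ζ₁ s w ↔ InTrace ζ₂ u w) :=
  ⟨dProgress_traceEquiv ζ₁ ζ₂, fun _ hP _ _ => hP.le_traceEquiv⟩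
end

section
/- Key lemma for up-to soundness: let R, R' be relations between two GKAT automata such that for every trace w, if all pairs in R agree on membership of w (w ∈ ⟦s⟧ iff w ∈ ⟦u⟧ for all (s,u) ∈ R) then all pairs in R' agree on membership of w. If additionally R progresses to R' with the dead-state predicate, then every pair (s,u) ∈ R satisfies ⟦s⟧ = ⟦u⟧. -/
/-- key lemma for up-to soundness: if for every trace `w`,
agreement of all pairs in `R` on membership of `w` implies agreement of all
pairs in `R'` on membership of `w`, and `R ⇝_dead R'`, then every pair in `R`
is trace equivalent. -/
theorem upto_key_lemma {S U At A : Type}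
    (ζ₁ : S → At → GRes S A) (ζ₂ : U → At → GRes U A) (R R' : S → U → Prop)
    (hlift : ∀ w : Trace At A,
      (∀ s u, R s u → (InTrace ζ₁ s w ↔ InTrace ζ₂ u w)) →
      (∀ s u, R' s u → (InTrace ζ₁ s w ↔ InTrace ζ₂ u w)))
    (hprog : DProgress ζ₁ ζ₂ R R') :
    ∀ s u, R s u → ∀ w, InTrace ζ₁ s w ↔ InTrace ζ₂ u w := by
  suffices h : ∀ w, ∀ s u, R s u → (InTrace ζ₁ s w ↔ InTrace ζ₂ u w) by
    intro s u hR w; exact h w s u hR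
  intro w
  induction w with
  | atom α =>
    intro s u hR
    obtain ⟨hacc, _⟩ := hprog s u hR α
    constructor
    · rintro ⟨h⟩; exact InTrace.accept (hacc.mp ‹_›)
    · rintro ⟨h⟩; exact InTrace.accept (hacc.mpr ‹_›)
  | cons α p w ih =>
    intro s u hR
    obtain ⟨hacc, h1, h2, h3, h4⟩ := hprog s u hR α
    have ih' := hlift w ih
    constructor
    · intro h
      cases h with
      | @step _ _ s' _ _ hζ hw =>
      cases hu : ζ₂ u α with
      | reject => exact absurd hw (h1 s' p hζ hu w)
      | accept => rw [hacc.mpr hu] at hζ; cases hζ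
      | step u' q =>
        by_cases hq : p = q
        · subst hq
          exact InTrace.step hu ((ih' s' u' (h4 s' u' p hζ hu)).mp hw)
        · exact absurd hw ((h3 s' p u' q hζ hu hq).1 w)
    · intro h
      cases h with
      | @step _ _ u' _ _ hζ hw =>
      cases hs : ζ₁ s α with
      | reject => exact absurd hw (h2 u' p hζ hs w)
      | accept => rw [hacc.mp hs] at hζ; cases hζ
      | step s' q =>
        by_cases hq : q = p
        · subst hq
          exact InTrace.step hs ((ih' s' u' (h4 s' u' q hs hζ)).mpr hw)
        · exact absurd hw ((h3 s' q u' p hs hζ hq).2 w)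
end

section
/- Soundness of transitive closure up-to for trace equivalence: if R progresses (with the dead-state predicate) to the transitive closure of R, then every pair of states in R is trace equivalent. -/
/-- soundness of transitive closure up-to for trace equivalence:
for `R ⊆ S × S` on a single GKAT automaton, if `R ⇝_dead R⁺` then every pair of
states in `R` is trace equivalent. -/
theorem transGen_upto_sound {S At A : Type}
    (ζ : S → At → GRes S A) (R : S → S → Prop)
    (hprog : DProgress ζ ζ R (Relation.TransGen R)) :
    ∀ s u, R s u → ∀ w, InTrace ζ s w ↔ InTrace ζ u w := by
  have main : ∀ w : Trace At A, ∀ s u, Relation.TransGen R s u →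
      (InTrace ζ s w ↔ InTrace ζ u w) := by
    intro w
    induction w with
    | atom α =>
      have single : ∀ s u, R s u →
          (InTrace ζ s (Trace.atom α) ↔ InTrace ζ u (Trace.atom α)) := by
        intro s u h
        have hc := (hprog s u h α).1
        constructor
        · intro hi
          cases hi with
          | accept ha => exact InTrace.accept (hc.mp ha)
        · intro hi
          cases hi with
          | accept ha => exact InTrace.accept (hc.mpr ha)
      intro s u h
      induction h with
      | single h => exact single _ _ h
      | tail _ h₂ ih => exact ih.trans (single _ _ h₂)
    | cons α p w ih =>
      have single : ∀ s u, R s u →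
          (InTrace ζ s (Trace.cons α p w) ↔ InTrace ζ u (Trace.cons α p w)) := by
        intro s u h
        obtain ⟨h1, h2, h3, h4, h5⟩ := hprog s u h α
        constructor
        · intro hi
          cases hi with
          | step hst hw =>
            cases hu : ζ u α with
            | reject => exact absurd hw (h2 _ _ hst hu _)
            | accept => exact absurd ((h1.mpr hu).symm.trans hst) (by simp)
            | step u' q =>
              by_cases hq : p = q
              · subst hq
                exact InTrace.step hu ((ih _ _ (h5 _ _ _ hst hu)).mp hw)
              · exact absurd hw ((h4 _ _ _ _ hst hu hq).1 _)
        · intro hi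
          cases hi with
          | step hut hw =>
            cases hs : ζ s α with
            | reject => exact absurd hw (h3 _ _ hut hs _)
            | accept => exact absurd ((h1.mp hs).symm.trans hut) (by simp)
            | step s' q =>
              by_cases hq : q = p
              · subst hq
                exact InTrace.step hs ((ih _ _ (h5 _ _ _ hs hut)).mpr hw)
              · exact absurd hw ((h4 _ _ _ _ hs hut hq).2 _)
      intro s u h
      induction h with
      | single h => exact single _ _ h
      | tail _ h₂ ih => exact ih.trans (single _ _ h₂)
  intro s u hR w
  exact main w s u (Relation.TransGen.single hR)
end
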